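/- arXiv:1712.08795 — 4 statements merged into one kernel-verified Lean document; each statement's English description precedes it below -/
import Mathlib

section
/- For every probability vector p, limsup_{k→∞} s_k(p)^{1/k} = max{ λ_s : B_s is communicated by some index i with p_i > 0 }, where the maximum is over a nonempty set since the block containing any index of the support of p is communicated by that index. (This is the paper's Proposition on tracial entropies of graphs: the entropy h_X^τ of a tracial state τ equals the maximum of log λ_{G_s} over the irreducible components G_s communicated by the support of τ, here stated in exponential form.) -/
/-!
Lower bound: the eigenvector `w` cut down to a block `B_s` is a vector `x ≥ 0` with
`G x ≥ λ_s x` entrywise, so once a path of length `k₀` leads from the support of `p` into `B_s`,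
`s_n(p) ≥ c λ_s ^ (n - k₀)`.

Upper bound: let `μ` be the maximum and `ν > μ`. For small `ε > 0` the vector
`v_j = ε ^ blk j * w_j` satisfies `G v ≤ ν v` at every index reachable from the support: the
diagonal block contributes `λ ≤ μ`, and every edge into a later block is damped by an extra
factor `ε`. Hence `s_n(p) ≤ C ν ^ n`, and taking `n`-th roots gives `limsup = μ`.
-/

/-- `s_k(p) = ∑_{i,j} p_i (G^k)_{ij}`, where `G` has natural-number entries. -/
def sk {N : ℕ} (G : Matrix (Fin N) (Fin N) ℕ) (p : Fin N → ℝ) (k : ℕ) : ℝ :=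
  ∑ i, ∑ j, p i * ((G ^ k) i j : ℝ)

/-- The block `B_s = blk⁻¹(s)` is communicated by the index `i`: there exist `k ≥ 0` and
`j ∈ B_s` with `(G^k)_{ij} > 0`. -/
def CommByIdx {N m : ℕ} (G : Matrix (Fin N) (Fin N) ℕ) (blk : Fin N → Fin m)
    (s : Fin m) (i : Fin N) : Prop :=
  ∃ k : ℕ, ∃ j : Fin N, blk j = s ∧ 0 < (G ^ k) i j

/-- The block `B_r` is communicated by the block `B_s`: it is communicated by some index of
`B_s`. -/
def CommByBlk {N m : ℕ} (G : Matrix (Fin N) (Fin N) ℕ) (blk : Fin N → Fin m)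
    (r s : Fin m) : Prop :=
  ∃ i : Fin N, blk i = s ∧ CommByIdx G blk r i

/-- The block `B_s` is a sink: `G_{ij} = 0` for all `i ∈ B_s` and `j ∉ B_s`. -/
def IsSinkBlk {N m : ℕ} (G : Matrix (Fin N) (Fin N) ℕ) (blk : Fin N → Fin m)
    (s : Fin m) : Prop :=
  ∀ i j : Fin N, blk i = s → blk j ≠ s → G i j = 0

/-- The block `B_s` is `μ`-maximal: `λ_s = μ` and `λ_s ≥ λ_r` for every block `B_r`
communicated by `B_s`. -/
def IsMaximalBlk {N m : ℕ} (G : Matrix (Fin N) (Fin N) ℕ) (blk : Fin N → Fin m)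
    (lam : Fin m → ℝ) (μ : ℝ) (s : Fin m) : Prop :=
  lam s = μ ∧ ∀ r : Fin m, CommByBlk G blk r s → lam r ≤ lam s

open Filter Topology Finset Matrix

section Roots

variable {u : ℕ → ℝ}

lemma tendsto_root_const_mul_pow {C ν : ℝ} (hC : 0 < C) (hν : 0 ≤ ν) :
    Tendsto (fun n : ℕ => (C * ν ^ n) ^ (n : ℝ)⁻¹) atTop (𝓝 ν) := by
  have hroot : Tendsto (fun n : ℕ => C ^ (n : ℝ)⁻¹) atTop (𝓝 1) := by
    have := (Real.continuousAt_const_rpow (b := 0) hC.ne').tendsto.comp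
      (tendsto_inv_atTop_zero.comp tendsto_natCast_atTop_atTop)
    rwa [Real.rpow_zero] at this
  have hlim := hroot.mul_const ν
  rw [one_mul] at hlim
  refine hlim.congr' ?_
  filter_upwards [eventually_ne_atTop 0] with n hn
  rw [Real.mul_rpow hC.le (pow_nonneg hν n), Real.pow_rpow_inv_natCast hν hn]

lemma limsup_root_le_of_le_mul_pow (hu : ∀ n, 0 ≤ u n) {C ν : ℝ} (hν : 0 ≤ ν)
    (h : ∀ n, u n ≤ C * ν ^ n) :
    IsBoundedUnder (· ≤ ·) atTop (fun n : ℕ => u n ^ (n : ℝ)⁻¹) ∧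
      limsup (fun n : ℕ => u n ^ (n : ℝ)⁻¹) atTop ≤ ν := by
  have hlim := tendsto_root_const_mul_pow (C := |C| + 1) (by positivity) hν
  have hle : (fun n : ℕ => u n ^ (n : ℝ)⁻¹) ≤ᶠ[atTop]
      fun n : ℕ => ((|C| + 1) * ν ^ n) ^ (n : ℝ)⁻¹ := by
    refine Eventually.of_forall fun n => Real.rpow_le_rpow (hu n) ((h n).trans ?_) (by positivity)
    exact mul_le_mul_of_nonneg_right (by linarith [le_abs_self C]) (pow_nonneg hν n)
  have hcobdd : IsCoboundedUnder (· ≤ ·) atTop (fun n : ℕ => u n ^ (n : ℝ)⁻¹) :=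
    isCoboundedUnder_le_of_eventually_le atTop (x := 0)
      (Eventually.of_forall fun n => Real.rpow_nonneg (hu n) _)
  exact ⟨hlim.isBoundedUnder_le.mono_le hle,
    (limsup_le_limsup hle hcobdd hlim.isBoundedUnder_le).trans_eq hlim.limsup_eq⟩

lemma le_limsup_root_of_mul_pow_sub_le (hu : ∀ n, 0 ≤ u n)
    (hbdd : IsBoundedUnder (· ≤ ·) atTop (fun n : ℕ => u n ^ (n : ℝ)⁻¹))
    {c ρ : ℝ} (hc : 0 < c) (hρ : 0 ≤ ρ) {k₀ : ℕ} (h : ∀ n ≥ k₀, c * ρ ^ (n - k₀) ≤ u n) :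
    ρ ≤ limsup (fun n : ℕ => u n ^ (n : ℝ)⁻¹) atTop := by
  rcases hρ.eq_or_lt with rfl | hρ
  · exact le_limsup_of_frequently_le (Frequently.of_forall fun n => Real.rpow_nonneg (hu n) _)
      hbdd
  have hlim := tendsto_root_const_mul_pow (C := c / ρ ^ k₀) (by positivity) hρ.le
  have hle : (fun n : ℕ => (c / ρ ^ k₀ * ρ ^ n) ^ (n : ℝ)⁻¹) ≤ᶠ[atTop]
      fun n : ℕ => u n ^ (n : ℝ)⁻¹ := by
    filter_upwards [eventually_ge_atTop k₀] with n hn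
    refine Real.rpow_le_rpow (by positivity) ?_ (by positivity)
    calc c / ρ ^ k₀ * ρ ^ n = c * ρ ^ (n - k₀) := by rw [pow_sub₀ _ hρ.ne' hn]; ring
      _ ≤ u n := h n hn
  exact hlim.limsup_eq.symm.trans_le (limsup_le_limsup hle hlim.isCoboundedUnder_le hbdd)

end Roots

lemma exists_pos_le_mul {ι : Type*} [Finite ι] (f g : ι → ℝ) (hg : ∀ i, 0 < g i) :
    ∃ K, 0 < K ∧ ∀ i, f i ≤ K * g i := by
  obtain ⟨K, hK⟩ := Finite.bddAbove_range fun i => f i / g i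
  refine ⟨max K 1, by positivity, fun i => ?_⟩
  have hi := hK (Set.mem_range_self i)
  rw [div_le_iff₀ (hg i)] at hi
  exact hi.trans (mul_le_mul_of_nonneg_right (le_max_left _ _) (hg i).le)

section NonnegMatrix

variable {ι : Type*} [Fintype ι] {A : Matrix ι ι ℝ}

lemma mulVec_apply_nonneg (hA : ∀ i j, 0 ≤ A i j) {v : ι → ℝ} (hv : ∀ i, 0 ≤ v i) (i : ι) :
    0 ≤ (A *ᵥ v) i :=
  sum_nonneg fun j _ => mul_nonneg (hA i j) (hv j)

lemma mulVec_apply_mono (hA : ∀ i j, 0 ≤ A i j) {v v' : ι → ℝ} (hvv' : ∀ i, v i ≤ v' i)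
    (i : ι) : (A *ᵥ v) i ≤ (A *ᵥ v') i :=
  sum_le_sum fun j _ => mul_le_mul_of_nonneg_left (hvv' j) (hA i j)

lemma apply_mul_le_mulVec_apply (hA : ∀ i j, 0 ≤ A i j) {v : ι → ℝ} (hv : ∀ i, 0 ≤ v i)
    (i l : ι) : A i l * v l ≤ (A *ᵥ v) i :=
  single_le_sum (f := fun j => A i j * v j) (fun j _ => mul_nonneg (hA i j) (hv j)) (mem_univ l)

lemma pow_mulVec_le_of_mulVec_le [DecidableEq ι] (hA : ∀ i j, 0 ≤ A i j) {I : Set ι}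
    (hI : ∀ i ∈ I, ∀ j, A i j ≠ 0 → j ∈ I) {v : ι → ℝ} {ν : ℝ} (hν : 0 ≤ ν)
    (h : ∀ i ∈ I, (A *ᵥ v) i ≤ ν * v i) (k : ℕ) : ∀ i ∈ I, (A ^ k *ᵥ v) i ≤ ν ^ k * v i := by
  induction k with
  | zero => simp
  | succ k ih =>
    intro i hi
    calc (A ^ (k + 1) *ᵥ v) i = (A *ᵥ (A ^ k *ᵥ v)) i := by rw [pow_succ', mulVec_mulVec]
      _ ≤ (A *ᵥ (ν ^ k • v)) i := sum_le_sum fun j _ => by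
          by_cases hij : A i j = 0
          · simp [hij]
          · exact mul_le_mul_of_nonneg_left (ih j (hI i hi j hij)) (hA i j)
      _ = ν ^ k * (A *ᵥ v) i := by rw [mulVec_smul, Pi.smul_apply, smul_eq_mul]
      _ ≤ ν ^ (k + 1) * v i := by
          rw [pow_succ, mul_assoc]; exact mul_le_mul_of_nonneg_left (h i hi) (pow_nonneg hν k)

lemma le_pow_mulVec_of_le_mulVec [DecidableEq ι] (hA : ∀ i j, 0 ≤ A i j) {v : ι → ℝ} {ν : ℝ}
    (hν : 0 ≤ ν) (h : ∀ i, ν * v i ≤ (A *ᵥ v) i) (k : ℕ) (i : ι) :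
    ν ^ k * v i ≤ (A ^ k *ᵥ v) i := by
  induction k generalizing i with
  | zero => simp
  | succ k ih =>
    calc ν ^ (k + 1) * v i ≤ ν ^ k * (A *ᵥ v) i := by
          rw [pow_succ, mul_assoc]; exact mul_le_mul_of_nonneg_left (h i) (pow_nonneg hν k)
      _ = (A *ᵥ (ν ^ k • v)) i := by rw [mulVec_smul, Pi.smul_apply, smul_eq_mul]
      _ ≤ (A *ᵥ (A ^ k *ᵥ v)) i := mulVec_apply_mono hA ih i
      _ = (A ^ (k + 1) *ᵥ v) i := by rw [pow_succ', mulVec_mulVec]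

end NonnegMatrix

section BlockTriangular

variable {ι : Type*} [Fintype ι] {A : Matrix ι ι ℝ} {m : ℕ} (blk : ι → Fin m)
  {lam : Fin m → ℝ} {w : ι → ℝ}

lemma exists_pos_mulVec_le (hA : ∀ i j, 0 ≤ A i j)
    (hupper : ∀ i j, blk j < blk i → A i j = 0) (hw : ∀ i, 0 < w i)
    (heig : ∀ i, ∑ j ∈ univ.filter (fun j => blk j = blk i), A i j * w j = lam (blk i) * w i)
    {μ ν : ℝ} (hμν : μ < ν) :
    ∃ v : ι → ℝ, (∀ i, 0 < v i) ∧ ∀ i, lam (blk i) ≤ μ → (A *ᵥ v) i ≤ ν * v i := by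
  obtain ⟨K, hK, hAw⟩ := exists_pos_le_mul (A *ᵥ w) w hw
  set ε := min 1 ((ν - μ) / K)
  have hε : 0 < ε := lt_min one_pos (div_pos (sub_pos.2 hμν) hK)
  have hεK : ε * K ≤ ν - μ :=
    calc ε * K ≤ (ν - μ) / K * K := mul_le_mul_of_nonneg_right (min_le_right _ _) hK.le
      _ = ν - μ := div_mul_cancel₀ _ hK.ne'
  refine ⟨fun j => ε ^ (blk j : ℕ) * w j, fun j => by have := hw j; positivity, fun i hi => ?_⟩
  set b : ℕ := (blk i : ℕ)
  have hterm : ∀ j, A i j * (ε ^ (blk j : ℕ) * w j) ≤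
      ε ^ b * (if blk j = blk i then A i j * w j else 0) + ε ^ (b + 1) * (A i j * w j) := by
    intro j
    have hdamped : 0 ≤ ε ^ (b + 1) * (A i j * w j) :=
      mul_nonneg (by positivity) (mul_nonneg (hA i j) (hw j).le)
    rcases lt_trichotomy (blk j) (blk i) with hlt | heq | hgt
    · simp [hupper i j hlt]
    · rw [if_pos heq, heq]
      linarith [mul_left_comm (A i j) (ε ^ b) (w j)]
    · rw [if_neg hgt.ne', mul_zero, zero_add, mul_left_comm]
      exact mul_le_mul_of_nonneg_right (pow_le_pow_of_le_one hε.le (min_le_left _ _) hgt)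
        (mul_nonneg (hA i j) (hw j).le)
  have hflow : ε * (A *ᵥ w) i ≤ (ν - μ) * w i :=
    calc ε * (A *ᵥ w) i ≤ ε * (K * w i) := mul_le_mul_of_nonneg_left (hAw i) hε.le
      _ ≤ (ν - μ) * w i := by rw [← mul_assoc]; exact mul_le_mul_of_nonneg_right hεK (hw i).le
  calc (A *ᵥ fun j => ε ^ (blk j : ℕ) * w j) i = ∑ j, A i j * (ε ^ (blk j : ℕ) * w j) := rfl
    _ ≤ ∑ j, (ε ^ b * (if blk j = blk i then A i j * w j else 0) + ε ^ (b + 1) * (A i j * w j)) :=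
        sum_le_sum fun j _ => hterm j
    _ = ε ^ b * (lam (blk i) * w i + ε * (A *ᵥ w) i) := by
        rw [sum_add_distrib, ← mul_sum, ← mul_sum, ← sum_filter, heig, pow_succ]
        simp only [mulVec, dotProduct]
        ring
    _ ≤ ε ^ b * (μ * w i + (ν - μ) * w i) := mul_le_mul_of_nonneg_left
        (add_le_add (mul_le_mul_of_nonneg_right hi (hw i).le) hflow) (by positivity)
    _ = ν * (ε ^ b * w i) := by ring

lemma le_mulVec_restrict_eigenvector (hA : ∀ i j, 0 ≤ A i j) (hw : ∀ i, 0 ≤ w i)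
    (heig : ∀ i, ∑ j ∈ univ.filter (fun j => blk j = blk i), A i j * w j = lam (blk i) * w i)
    (s : Fin m) (i : ι) :
    lam s * (if blk i = s then w i else 0) ≤ (A *ᵥ fun j => if blk j = s then w j else 0) i := by
  split_ifs with hi
  · subst hi
    rw [← heig i, sum_filter]
    simp only [mulVec, dotProduct, mul_ite, mul_zero, le_refl]
  · rw [mul_zero]
    exact mulVec_apply_nonneg hA (fun j => by split_ifs; exacts [hw j, le_rfl]) i

end BlockTriangular

section Graph

variable {N m : ℕ} {G : Matrix (Fin N) (Fin N) ℕ}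

lemma map_natCast_pow_apply (k : ℕ) (i j : Fin N) :
    ((G.map ((↑) : ℕ → ℝ)) ^ k) i j = ((G ^ k) i j : ℝ) := by
  rw [show G.map ((↑) : ℕ → ℝ) = G.map (Nat.castRingHom ℝ) from rfl, ← Matrix.map_pow]
  rfl

lemma sk_eq_sum_mul_mulVec_one (p : Fin N → ℝ) (k : ℕ) :
    sk G p k = ∑ i, p i * ((G.map ((↑) : ℕ → ℝ)) ^ k *ᵥ 1) i := by
  simp only [sk, mulVec, dotProduct, Pi.one_apply, mul_one, mul_sum, map_natCast_pow_apply]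

lemma sk_nonneg {p : Fin N → ℝ} (hp : ∀ i, 0 ≤ p i) (k : ℕ) : 0 ≤ sk G p k :=
  sum_nonneg fun i _ => sum_nonneg fun _ _ => mul_nonneg (hp i) (Nat.cast_nonneg _)

variable {blk : Fin N → Fin m} {lam : Fin m → ℝ} {w : Fin N → ℝ} {p : Fin N → ℝ}

lemma exists_sk_le_mul_pow (hupper : ∀ i j, blk j < blk i → G i j = 0) (hw : ∀ i, 0 < w i)
    (heig : ∀ i, ∑ j ∈ univ.filter (fun j => blk j = blk i), (G i j : ℝ) * w j =
      lam (blk i) * w i)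
    (hp : ∀ i, 0 ≤ p i) {μ ν : ℝ} (hμ : ∀ s i, 0 < p i → CommByIdx G blk s i → lam s ≤ μ)
    (hν : 0 ≤ ν) (hμν : μ < ν) : ∃ C, ∀ k, sk G p k ≤ C * ν ^ k := by
  set A := G.map ((↑) : ℕ → ℝ)
  have hA : ∀ i j, 0 ≤ A i j := fun i j => Nat.cast_nonneg _
  obtain ⟨v, hv, hsub⟩ :=
    exists_pos_mulVec_le blk hA (fun i j h => by simp [A, hupper i j h]) hw heig hμν
  obtain ⟨c, hc, hcv⟩ := exists_pos_le_mul 1 v hv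
  set I : Set (Fin N) := {j | ∃ i, 0 < p i ∧ ∃ k, 0 < (G ^ k) i j}
  have hI : ∀ i ∈ I, ∀ j, A i j ≠ 0 → j ∈ I := by
    rintro i ⟨i₀, hi₀, k, hk⟩ j hij
    refine ⟨i₀, hi₀, k + 1, ?_⟩
    rw [pow_succ, mul_apply]
    exact sum_pos' (fun _ _ => Nat.zero_le _)
      ⟨i, mem_univ _, Nat.mul_pos hk (Nat.pos_of_ne_zero (by simpa [A] using hij))⟩
  have hpow := pow_mulVec_le_of_mulVec_le hA hI hν
    (fun j ⟨i, hi, k, hk⟩ => hsub j (hμ _ i hi ⟨k, j, rfl, hk⟩))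
  refine ⟨c * ∑ i, p i * v i, fun k => ?_⟩
  rw [sk_eq_sum_mul_mulVec_one, mul_sum, sum_mul]
  refine sum_le_sum fun i _ => ?_
  rcases (hp i).eq_or_lt with hpi | hpi
  · simp [← hpi]
  calc p i * (A ^ k *ᵥ 1) i ≤ p i * (A ^ k *ᵥ (c • v)) i :=
        mul_le_mul_of_nonneg_left (mulVec_apply_mono (pow_apply_nonneg hA k) hcv i) hpi.le
    _ = c * p i * (A ^ k *ᵥ v) i := by rw [mulVec_smul, Pi.smul_apply, smul_eq_mul]; ring
    _ ≤ c * p i * (ν ^ k * v i) :=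
        mul_le_mul_of_nonneg_left (hpow k i ⟨i, hpi, 0, by simp⟩) (by positivity)
    _ = c * (p i * v i) * ν ^ k := by ring

lemma exists_mul_pow_sub_le_sk (hw : ∀ i, 0 < w i)
    (heig : ∀ i, ∑ j ∈ univ.filter (fun j => blk j = blk i), (G i j : ℝ) * w j =
      lam (blk i) * w i)
    (hp : ∀ i, 0 ≤ p i) {s : Fin m} {i : Fin N} (hpi : 0 < p i) (hs : CommByIdx G blk s i)
    (hlam : 0 ≤ lam s) : ∃ c, 0 < c ∧ ∃ k₀, ∀ n ≥ k₀, c * lam s ^ (n - k₀) ≤ sk G p n := by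
  obtain ⟨k₀, j₀, rfl, hk₀⟩ := hs
  set A := G.map ((↑) : ℕ → ℝ)
  have hA : ∀ i j, 0 ≤ A i j := fun i j => Nat.cast_nonneg _
  set x : Fin N → ℝ := fun j => if blk j = blk j₀ then w j else 0
  have hx : ∀ j, 0 ≤ x j := fun j => by simp only [x]; split_ifs; exacts [(hw j).le, le_rfl]
  have hsuper := le_pow_mulVec_of_le_mulVec hA hlam
    (le_mulVec_restrict_eigenvector blk hA (fun j => (hw j).le) heig (blk j₀))
  obtain ⟨C, hC, hxC⟩ := exists_pos_le_mul x 1 fun _ => one_pos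
  have hA₀ : 0 < (A ^ k₀) i j₀ := by rw [map_natCast_pow_apply]; exact_mod_cast hk₀
  refine ⟨p i * (A ^ k₀) i j₀ * w j₀ / C, by have := hw j₀; positivity, k₀, fun n hn => ?_⟩
  obtain ⟨t, rfl⟩ := Nat.exists_eq_add_of_le hn
  calc p i * (A ^ k₀) i j₀ * w j₀ / C * lam (blk j₀) ^ (k₀ + t - k₀)
      = p i * ((A ^ k₀) i j₀ * (lam (blk j₀) ^ t * x j₀)) / C := by
        simp only [x, if_pos, Nat.add_sub_cancel_left]; ring
    _ ≤ p i * ((A ^ k₀) i j₀ * (A ^ t *ᵥ x) j₀) / C := by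
        gcongr; exact hsuper t j₀
    _ ≤ p i * (A ^ (k₀ + t) *ᵥ x) i / C := by
        gcongr
        rw [pow_add, ← mulVec_mulVec]
        exact apply_mul_le_mulVec_apply (pow_apply_nonneg hA k₀)
          (mulVec_apply_nonneg (pow_apply_nonneg hA t) hx) i j₀
    _ ≤ p i * (A ^ (k₀ + t) *ᵥ 1) i := by
        rw [div_le_iff₀ hC, mul_assoc]
        gcongr
        calc (A ^ (k₀ + t) *ᵥ x) i ≤ (A ^ (k₀ + t) *ᵥ (C • 1)) i :=
              mulVec_apply_mono (pow_apply_nonneg hA _) hxC i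
          _ = (A ^ (k₀ + t) *ᵥ 1) i * C := by
              rw [mulVec_smul, Pi.smul_apply, smul_eq_mul, mul_comm]
    _ ≤ sk G p (k₀ + t) := by
        rw [sk_eq_sum_mul_mulVec_one]
        exact single_le_sum (f := fun i => p i * (A ^ (k₀ + t) *ᵥ 1) i)
          (fun i _ => mul_nonneg (hp i)
            (mulVec_apply_nonneg (pow_apply_nonneg hA _) (fun _ => zero_le_one) i)) (mem_univ i)

end Graph

theorem stmt_5_general
    -- Context: `G` is an `N × N` matrix with nonnegative integer entries, block upper
    -- triangular with respect to the partition of `Fin N` into `m` nonempty consecutive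
    -- blocks given by the fibers of the monotone surjection `blk`; each diagonal block
    -- `G_s` has eigenvalue `λ_s ≥ 0` with strictly positive eigenvector `w|_{B_s}`.
    (N m : ℕ)
    (G : Matrix (Fin N) (Fin N) ℕ)
    (blk : Fin N → Fin m)
    (hupper : ∀ i j : Fin N, blk j < blk i → G i j = 0)
    (lam : Fin m → ℝ) (hlam : ∀ s, 0 ≤ lam s)
    (w : Fin N → ℝ) (hw : ∀ i, 0 < w i)
    (heig : ∀ i : Fin N,
      ∑ j ∈ Finset.univ.filter (fun j => blk j = blk i), (G i j : ℝ) * w j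
        = lam (blk i) * w i)
    :
    ∀ p : Fin N → ℝ, (∀ i, 0 ≤ p i) → (∑ i, p i = 1) →
      IsGreatest
        {x : ℝ | ∃ s : Fin m, (∃ i : Fin N, 0 < p i ∧ CommByIdx G blk s i) ∧ lam s = x}
        (Filter.limsup (fun k : ℕ => sk G p k ^ ((k : ℝ)⁻¹)) Filter.atTop) := by
  intro p hp hp1
  set S := {x : ℝ | ∃ s : Fin m, (∃ i : Fin N, 0 < p i ∧ CommByIdx G blk s i) ∧ lam s = x}
  obtain ⟨i₀, -, hi₀⟩ := exists_lt_of_sum_lt (s := univ) (f := 0) (g := p) (by simp [hp1])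
  have hcomm₀ : CommByIdx G blk (blk i₀) i₀ := ⟨0, i₀, rfl, by simp⟩
  have hSne : S.Nonempty := ⟨_, _, ⟨i₀, hi₀, hcomm₀⟩, rfl⟩
  have hSfin : S.Finite := (Set.finite_range lam).subset (by rintro _ ⟨s, -, rfl⟩; exact ⟨s, rfl⟩)
  have hS_le : ∀ s i, 0 < p i → CommByIdx G blk s i → lam s ≤ sSup S :=
    fun s i hi hs => le_csSup hSfin.bddAbove ⟨s, ⟨i, hi, hs⟩, rfl⟩
  have hroot_le : ∀ ν, sSup S < ν →
      IsBoundedUnder (· ≤ ·) atTop (fun k : ℕ => sk G p k ^ (k : ℝ)⁻¹) ∧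
        limsup (fun k : ℕ => sk G p k ^ (k : ℝ)⁻¹) atTop ≤ ν := fun ν hν => by
    have hν0 : 0 ≤ ν := ((hlam _).trans (hS_le _ _ hi₀ hcomm₀)).trans hν.le
    obtain ⟨C, hC⟩ := exists_sk_le_mul_pow hupper hw heig hp hS_le hν0 hν
    exact limsup_root_le_of_le_mul_pow (sk_nonneg hp) hν0 hC
  have hle_root : ∀ x ∈ S, x ≤ limsup (fun k : ℕ => sk G p k ^ (k : ℝ)⁻¹) atTop := by
    rintro _ ⟨s, ⟨i, hi, hs⟩, rfl⟩
    obtain ⟨c, hc, k₀, h⟩ := exists_mul_pow_sub_le_sk hw heig hp hi hs (hlam s)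
    exact le_limsup_root_of_mul_pow_sub_le (sk_nonneg hp)
      (hroot_le _ (lt_add_one _)).1 hc (hlam s) h
  have hlimsup : limsup (fun k : ℕ => sk G p k ^ (k : ℝ)⁻¹) atTop = sSup S :=
    le_antisymm (le_of_forall_gt_imp_ge_of_dense fun ν hν => (hroot_le ν hν).2)
      (hle_root _ (hSne.csSup_mem hSfin))
  exact ⟨hlimsup ▸ hSne.csSup_mem hSfin, hle_root⟩

/-- for every probability vector `p`, `limsup_k s_k(p)^{1/k}` is the
maximum of the eigenvalues `λ_s` over the blocks `B_s` communicated by some index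
in the support of `p` (stated via `IsGreatest`, which also records that this set
of eigenvalues is nonempty). -/
theorem stmt_5
    -- Context: `G` is an `N × N` matrix with nonnegative integer entries, block upper
    -- triangular with respect to the partition of `Fin N` into `m` nonempty consecutive
    -- blocks given by the fibers of the monotone surjection `blk`; each diagonal block
    -- `G_s` has eigenvalue `λ_s ≥ 0` with strictly positive eigenvector `w|_{B_s}`.
    (N m : ℕ) (hN : 1 ≤ N) (hm : 1 ≤ m)
    (G : Matrix (Fin N) (Fin N) ℕ)
    (blk : Fin N → Fin m) (hmono : Monotone blk) (hsurj : Function.Surjective blk)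
    (hupper : ∀ i j : Fin N, blk j < blk i → G i j = 0)
    (lam : Fin m → ℝ) (hlam : ∀ s, 0 ≤ lam s)
    (w : Fin N → ℝ) (hw : ∀ i, 0 < w i)
    (heig : ∀ i : Fin N,
      ∑ j ∈ Finset.univ.filter (fun j => blk j = blk i), (G i j : ℝ) * w j
        = lam (blk i) * w i)
    :
    ∀ p : Fin N → ℝ, (∀ i, 0 ≤ p i) → (∑ i, p i = 1) →
      IsGreatest
        {x : ℝ | ∃ s : Fin m, (∃ i : Fin N, 0 < p i ∧ CommByIdx G blk s i) ∧ lam s = x}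
        (Filter.limsup (fun k : ℕ => sk G p k ^ ((k : ℝ)⁻¹)) Filter.atTop) :=
  stmt_5_general N m G blk hupper lam hlam w hw heig
end

section
/- If the block B_s is communicated by the index r, then there exist a constant c > 0 and an integer N₀ ≥ 1 such that ∑_j (G^k)_{rj} ≥ c · λ_s^k for all k ≥ N₀. (This is the lower-bound step in the paper's proof of the tracial entropy formula for graphs: a vertex communicating with a component G_s emits at least on the order of λ_{G_s}^k paths of length k.) -/
/-! If `(G^k₀)_{r j₀} > 0` with `j₀ ∈ B_s`, then every path of length `n` out of `j₀` extends a
path of length `k₀` from `r`, so `∑_j (G^{k₀+n})_{rj} ≥ (G^{k₀})_{r j₀} ∑_j (G^n)_{j₀ j}`.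
Block triangularity makes the eigen-relation `G_s w_s = λ_s w_s` survive in the powers:
`∑_{j ∈ B_s} (G^n)_{j₀ j} w_j = λ_s^n w_{j₀}`. Bounding `w_j` by `∑ w` turns this into
`∑_j (G^n)_{j₀ j} ≥ λ_s^n w_{j₀} / ∑ w`. -/

open Finset

namespace Matrix

variable {k m n α R : Type*} [Fintype m] [Fintype n]

theorem apply_mul_sum_le_sum_mul_apply [Semiring R] [PartialOrder R] [IsOrderedRing R]
    {A : Matrix k m R} {B : Matrix m n R} (hA : ∀ i j, 0 ≤ A i j) (hB : ∀ i j, 0 ≤ B i j)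
    (i : k) (l : m) : A i l * ∑ j, B l j ≤ ∑ j, (A * B) i j := by
  have hrow : ∑ j, (A * B) i j = ∑ l, A i l * ∑ j, B l j := by
    simp only [mul_apply, mul_sum]
    exact sum_comm
  rw [hrow]
  exact single_le_sum (fun l _ => mul_nonneg (hA i l) (sum_nonneg fun j _ => hB l j)) (mem_univ l)

variable [DecidableEq m] [LinearOrder α] {b : m → α} {lam : α → R} {w : m → R}

theorem BlockTriangular.sum_pow_apply_mul_eq [CommSemiring R] {M : Matrix m m R}
    (hM : M.BlockTriangular b)
    (hw : ∀ i, ∑ j ∈ univ.filter (fun j => b j = b i), M i j * w j = lam (b i) * w i)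
    (p : ℕ) (i : m) :
    ∑ j ∈ univ.filter (fun j => b j = b i), (M ^ p) i j * w j = lam (b i) ^ p * w i := by
  induction p generalizing i with
  | zero => simp [one_apply]
  | succ p ih =>
    set S := univ.filter fun j => b j = b i
    have hout : ∀ l ∉ S, M i l * ∑ j ∈ S, (M ^ p) l j * w j = 0 := by
      intro l hl
      rcases lt_or_gt_of_ne (show b l ≠ b i by simpa [S] using hl) with h | h
      · rw [hM h, zero_mul]
      · refine mul_eq_zero_of_right _ (sum_eq_zero fun j hj => ?_)
        rw [hM.pow p (by rwa [(mem_filter.1 hj).2]), zero_mul]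
    calc ∑ j ∈ S, (M ^ (p + 1)) i j * w j = ∑ l, M i l * ∑ j ∈ S, (M ^ p) l j * w j := by
          simp only [pow_succ', mul_apply, sum_mul, mul_sum, mul_assoc]
          exact sum_comm
      _ = ∑ l ∈ S, M i l * ∑ j ∈ S, (M ^ p) l j * w j :=
          (sum_subset (subset_univ S) fun l _ hl => hout l hl).symm
      _ = ∑ l ∈ S, M i l * (lam (b i) ^ p * w l) := sum_congr rfl fun l hl => by
          rw [← (mem_filter.1 hl).2, ← ih l, (mem_filter.1 hl).2]
      _ = lam (b i) ^ p * ∑ l ∈ S, M i l * w l := by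
          rw [mul_sum]
          exact sum_congr rfl fun l _ => mul_left_comm _ _ _
      _ = lam (b i) ^ (p + 1) * w i := by rw [hw i, pow_succ, mul_assoc]

theorem BlockTriangular.pow_mul_le_sum_mul_sum_pow_apply [CommSemiring R] [PartialOrder R]
    [IsOrderedRing R] {M : Matrix m m R} (hM : M.BlockTriangular b) (hM₀ : ∀ i j, 0 ≤ M i j)
    (hw₀ : ∀ i, 0 ≤ w i)
    (hw : ∀ i, ∑ j ∈ univ.filter (fun j => b j = b i), M i j * w j = lam (b i) * w i)
    (p : ℕ) (i : m) : lam (b i) ^ p * w i ≤ (∑ j, w j) * ∑ j, (M ^ p) i j := by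
  have hMp := pow_apply_nonneg hM₀ p i
  calc lam (b i) ^ p * w i
      = ∑ j ∈ univ.filter (fun j => b j = b i), (M ^ p) i j * w j :=
        (hM.sum_pow_apply_mul_eq hw p i).symm
    _ ≤ ∑ j ∈ univ.filter (fun j => b j = b i), (M ^ p) i j * ∑ j, w j :=
        sum_le_sum fun j _ =>
          mul_le_mul_of_nonneg_left (single_le_sum (fun l _ => hw₀ l) (mem_univ j)) (hMp j)
    _ ≤ ∑ j, (M ^ p) i j * ∑ j, w j :=
        sum_le_sum_of_subset_of_nonneg (subset_univ _) fun j _ _ =>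
          mul_nonneg (hMp j) (sum_nonneg fun l _ => hw₀ l)
    _ = (∑ j, w j) * ∑ j, (M ^ p) i j := by rw [← sum_mul, mul_comm]

end Matrix

theorem stmt_6_general
    -- Context: `G` is an `N × N` matrix with nonnegative integer entries, block upper
    -- triangular with respect to the partition of `Fin N` into `m` nonempty consecutive
    -- blocks given by the fibers of the monotone surjection `blk`; each diagonal block
    -- `G_s` has eigenvalue `λ_s ≥ 0` with strictly positive eigenvector `w|_{B_s}`.
    (N m : ℕ)
    (G : Matrix (Fin N) (Fin N) ℕ)
    (blk : Fin N → Fin m)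
    (hupper : ∀ i j : Fin N, blk j < blk i → G i j = 0)
    (lam : Fin m → ℝ) (hlam : ∀ s, 0 ≤ lam s)
    (w : Fin N → ℝ) (hw : ∀ i, 0 < w i)
    (heig : ∀ i : Fin N,
      ∑ j ∈ Finset.univ.filter (fun j => blk j = blk i), (G i j : ℝ) * w j
        = lam (blk i) * w i)
    :
    ∀ (r : Fin N) (s : Fin m), CommByIdx G blk s r →
      ∃ c : ℝ, 0 < c ∧ ∃ N₀ : ℕ, 1 ≤ N₀ ∧
        ∀ k : ℕ, N₀ ≤ k → c * lam s ^ k ≤ ∑ j, ((G ^ k) r j : ℝ) := by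
  rintro r s ⟨k₀, j₀, rfl, hpos⟩
  set M := G.map (Nat.castRingHom ℝ)
  have hM₀ : ∀ i j, 0 ≤ M i j := fun i j => Nat.cast_nonneg _
  have hpowM : ∀ p i j, ((G ^ p) i j : ℝ) = (M ^ p) i j := fun p i j => by
    rw [← Matrix.map_pow]; rfl
  have hrow := (Matrix.BlockTriangular.map (Nat.castRingHom ℝ) hupper
    |>.pow_mul_le_sum_mul_sum_pow_apply hM₀ (fun i => (hw i).le) heig)
  set L := lam (blk j₀)
  set A := (M ^ k₀) r j₀
  set W := ∑ j, w j
  have hA : 0 < A := by simpa [A, ← hpowM] using hpos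
  have hw₀ : 0 < w j₀ := hw j₀
  have hW : 0 < W := hw₀.trans_le (single_le_sum (fun j _ => (hw j).le) (mem_univ j₀))
  have hL : 0 ≤ L := hlam _
  -- `(L + 1) ^ k₀` instead of `L ^ k₀`, which may vanish
  refine ⟨A * w j₀ / (W * (L + 1) ^ k₀), by positivity, k₀ + 1, by omega, fun k hk => ?_⟩
  obtain ⟨p, rfl⟩ := Nat.exists_eq_add_of_le (by omega : k₀ ≤ k)
  have hratio : L ^ k₀ / (L + 1) ^ k₀ ≤ 1 :=
    div_le_one_of_le₀ (pow_le_pow_left₀ hL (by linarith) k₀) (by positivity)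
  simp only [hpowM]
  calc A * w j₀ / (W * (L + 1) ^ k₀) * L ^ (k₀ + p)
      = A * (L ^ p * w j₀) / W * (L ^ k₀ / (L + 1) ^ k₀) := by rw [pow_add]; field_simp
    _ ≤ A * (L ^ p * w j₀) / W := mul_le_of_le_one_right (by positivity) hratio
    _ ≤ A * ∑ j, (M ^ p) j₀ j := by
        rw [div_le_iff₀ hW, mul_assoc, mul_comm _ W]
        exact mul_le_mul_of_nonneg_left (hrow p j₀) hA.le
    _ ≤ ∑ j, (M ^ (k₀ + p)) r j := by
        rw [pow_add]
        exact Matrix.apply_mul_sum_le_sum_mul_apply (Matrix.pow_apply_nonneg hM₀ k₀)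
          (Matrix.pow_apply_nonneg hM₀ p) r j₀

/-- if the block `B_s` is communicated by the index `r`, then there are
`c > 0` and `N₀ ≥ 1` with `∑_j (G^k)_{rj} ≥ c · λ_s^k` for all `k ≥ N₀`. -/
theorem stmt_6
    -- Context: `G` is an `N × N` matrix with nonnegative integer entries, block upper
    -- triangular with respect to the partition of `Fin N` into `m` nonempty consecutive
    -- blocks given by the fibers of the monotone surjection `blk`; each diagonal block
    -- `G_s` has eigenvalue `λ_s ≥ 0` with strictly positive eigenvector `w|_{B_s}`.
    (N m : ℕ) (hN : 1 ≤ N) (hm : 1 ≤ m)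
    (G : Matrix (Fin N) (Fin N) ℕ)
    (blk : Fin N → Fin m) (hmono : Monotone blk) (hsurj : Function.Surjective blk)
    (hupper : ∀ i j : Fin N, blk j < blk i → G i j = 0)
    (lam : Fin m → ℝ) (hlam : ∀ s, 0 ≤ lam s)
    (w : Fin N → ℝ) (hw : ∀ i, 0 < w i)
    (heig : ∀ i : Fin N,
      ∑ j ∈ Finset.univ.filter (fun j => blk j = blk i), (G i j : ℝ) * w j
        = lam (blk i) * w i)
    :
    ∀ (r : Fin N) (s : Fin m), CommByIdx G blk s r →
      ∃ c : ℝ, 0 < c ∧ ∃ N₀ : ℕ, 1 ≤ N₀ ∧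
        ∀ k : ℕ, N₀ ≤ k → c * lam s ^ k ≤ ∑ j, ((G ^ k) r j : ℝ) :=
  stmt_6_general N m G blk hupper lam hlam w hw heig
end

section
/- Let r be an index and set λ := max{ λ_s : B_s is communicated by r }. If λ ≥ 1, then there exists a constant C > 0 such that ∑_j (G^k)_{rj} ≤ C · k^m · λ^k for all k ≥ 1. (This is the upper-bound step in the paper's proof of the tracial entropy formula for graphs: decomposing every path of length k from r into segments inside irreducible components joined by at most m transitional edges bounds the number of such paths by a polynomial in k times λ^k.) -/
open Finset Matrix

-- the growth recursion of `pow_mulVec_le_of_lower_levels` for `F k = B^(h+1) (k+1)^(h+1) μ^k`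
-- and `E k = B^h (k+1)^h μ^k`
theorem add_one_pow_growth {B μ x : ℝ} (hB : 1 ≤ B) (hμ : 1 ≤ μ) (hx : 0 ≤ x) (h k : ℕ) :
    B ^ (h + 1) * (x + 1) ^ (h + 1) * μ ^ k * μ + B ^ h * (x + 1) ^ h * μ ^ k * B
      ≤ B ^ (h + 1) * (x + 2) ^ (h + 1) * μ ^ (k + 1) := by
  have hx1 : (x + 1) ^ h ≤ (x + 1) ^ h * μ := le_mul_of_one_le_right (by positivity) hμ
  have hx2 : (x + 2) * (x + 1) ^ h ≤ (x + 2) ^ (h + 1) := by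
    rw [pow_succ']
    exact mul_le_mul_of_nonneg_left (pow_le_pow_left₀ (by positivity) (by linarith) h)
      (by positivity)
  calc B ^ (h + 1) * (x + 1) ^ (h + 1) * μ ^ k * μ + B ^ h * (x + 1) ^ h * μ ^ k * B
      = B ^ (h + 1) * μ ^ k * ((x + 1) ^ (h + 1) * μ + (x + 1) ^ h) := by ring
    _ ≤ B ^ (h + 1) * μ ^ k * ((x + 2) * (x + 1) ^ h * μ) := by
      gcongr
      linarith [show (x + 2) * (x + 1) ^ h * μ = (x + 1) ^ (h + 1) * μ + (x + 1) ^ h * μ by ring]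
    _ ≤ B ^ (h + 1) * μ ^ k * ((x + 2) ^ (h + 1) * μ) := by gcongr
    _ = B ^ (h + 1) * (x + 2) ^ (h + 1) * μ ^ (k + 1) := by ring

section

variable {ι : Type*}

theorem sum_mul_le_mul_sum_of_le {s : Finset ι} {a v w : ι → ℝ} {c : ℝ}
    (ha : ∀ j ∈ s, 0 ≤ a j) (hv : ∀ j ∈ s, a j ≠ 0 → v j ≤ c * w j) :
    ∑ j ∈ s, a j * v j ≤ c * ∑ j ∈ s, a j * w j := by
  rw [mul_sum]
  refine sum_le_sum fun j hj => ?_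
  rcases eq_or_ne (a j) 0 with h0 | h0
  · simp [h0]
  · calc a j * v j ≤ a j * (c * w j) := mul_le_mul_of_nonneg_left (hv j hj h0) (ha j hj)
      _ = c * (a j * w j) := by ring

variable [Fintype ι]

theorem exists_mulVec_le_mul (A : Matrix ι ι ℝ) {w : ι → ℝ} (hw : ∀ i, 0 < w i) :
    ∃ B, 1 ≤ B ∧ ∀ i, (A *ᵥ w) i ≤ B * w i := by
  obtain ⟨M, hM⟩ := Finite.exists_le fun i => (A *ᵥ w) i / w i
  refine ⟨max M 1, le_max_right _ _, fun i => ?_⟩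
  rw [← div_le_iff₀ (hw i)]
  exact (hM i).trans (le_max_left _ _)

theorem mul_sum_row_le_mulVec (M : Matrix ι ι ℝ) (r : ι) (hM : ∀ j, 0 ≤ M r j) {w : ι → ℝ}
    {c : ℝ} (hc : ∀ j, c ≤ w j) : c * ∑ j, M r j ≤ (M *ᵥ w) r := by
  rw [mul_sum]
  exact sum_le_sum fun j _ => by
    rw [mul_comm]; exact mul_le_mul_of_nonneg_left (hc j) (hM j)

variable [DecidableEq ι]
variable {A : Matrix ι ι ℝ} {ht : ι → ℕ} {S : Set ι} {w : ι → ℝ} {μ B : ℝ}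

theorem pow_mulVec_le_of_lower_levels (hA : ∀ i j, 0 ≤ A i j)
    (hdesc : ∀ i j, A i j ≠ 0 → ht j ≤ ht i) (hS : ∀ i j, i ∈ S → A i j ≠ 0 → j ∈ S)
    (hw : ∀ i, 0 ≤ w i)
    (hdiag : ∀ i ∈ S, ∑ j with ht j = ht i, A i j * w j ≤ μ * w i)
    (hB : ∀ i, (A *ᵥ w) i ≤ B * w i)
    {h : ℕ} {E F : ℕ → ℝ} (hE : ∀ k, 0 ≤ E k) (hF : ∀ k, 0 ≤ F k) (hF_zero : 1 ≤ F 0)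
    (hEF : ∀ k, F k * μ + E k * B ≤ F (k + 1))
    (hlower : ∀ k, ∀ j ∈ S, ht j < h → (A ^ k *ᵥ w) j ≤ E k * w j) :
    ∀ k, ∀ i ∈ S, ht i ≤ h → (A ^ k *ᵥ w) i ≤ F k * w i := by
  intro k
  induction k with
  | zero =>
    intro i _ _
    simpa using le_mul_of_one_le_left (hw i) hF_zero
  | succ k ih =>
    intro i hi hih
    have hsame : ∑ j with ht j = ht i, A i j * (A ^ k *ᵥ w) j ≤ F k * (μ * w i) := by
      refine (sum_mul_le_mul_sum_of_le (fun j _ => hA i j) fun j hj hij => ?_).trans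
        (mul_le_mul_of_nonneg_left (hdiag i hi) (hF k))
      exact ih j (hS i j hi hij) ((mem_filter.1 hj).2 ▸ hih)
    have hoff_sum : ∑ j with ht j ≠ ht i, A i j * w j ≤ B * w i :=
      (sum_le_sum_of_subset_of_nonneg (filter_subset _ _)
        fun j _ _ => mul_nonneg (hA i j) (hw j)).trans (hB i)
    have hoff : ∑ j with ht j ≠ ht i, A i j * (A ^ k *ᵥ w) j ≤ E k * (B * w i) := by
      refine (sum_mul_le_mul_sum_of_le (fun j _ => hA i j) fun j hj hij => ?_).trans
        (mul_le_mul_of_nonneg_left hoff_sum (hE k))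
      have hne := (mem_filter.1 hj).2
      exact hlower k j (hS i j hi hij) (by have := hdesc i j hij; omega)
    calc (A ^ (k + 1) *ᵥ w) i
        = ∑ j with ht j = ht i, A i j * (A ^ k *ᵥ w) j
          + ∑ j with ht j ≠ ht i, A i j * (A ^ k *ᵥ w) j := by
          rw [pow_succ', ← mulVec_mulVec, sum_filter_add_sum_filter_not]; rfl
      _ ≤ (F k * μ + E k * B) * w i := by linarith
      _ ≤ F (k + 1) * w i := mul_le_mul_of_nonneg_right (hEF k) (hw i)

theorem pow_mulVec_le_of_height (hA : ∀ i j, 0 ≤ A i j)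
    (hdesc : ∀ i j, A i j ≠ 0 → ht j ≤ ht i) (hS : ∀ i j, i ∈ S → A i j ≠ 0 → j ∈ S)
    (hw : ∀ i, 0 ≤ w i)
    (hdiag : ∀ i ∈ S, ∑ j with ht j = ht i, A i j * w j ≤ μ * w i)
    (hB : ∀ i, (A *ᵥ w) i ≤ B * w i) (hμ : 1 ≤ μ) (hB1 : 1 ≤ B) (h k : ℕ) :
    ∀ i ∈ S, ht i ≤ h → (A ^ k *ᵥ w) i ≤ B ^ h * (k + 1) ^ h * μ ^ k * w i := by
  have hμ0 : 0 ≤ μ := zero_le_one.trans hμ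
  have hB0 : 0 ≤ B := zero_le_one.trans hB1
  induction h generalizing k with
  | zero =>
    refine pow_mulVec_le_of_lower_levels hA hdesc hS hw hdiag hB
      (E := 0) (F := fun k => B ^ 0 * ((k : ℝ) + 1) ^ 0 * μ ^ k) (fun _ => le_rfl)
      (fun _ => by positivity) (by simp) (fun k => by simp [pow_succ])
      (fun _ _ _ h => absurd h (Nat.not_lt_zero _)) k
  | succ h ih =>
    refine pow_mulVec_le_of_lower_levels hA hdesc hS hw hdiag hB
      (E := fun k => B ^ h * ((k : ℝ) + 1) ^ h * μ ^ k)
      (F := fun k => B ^ (h + 1) * ((k : ℝ) + 1) ^ (h + 1) * μ ^ k)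
      (fun _ => by positivity) (fun _ => by positivity) (by simpa using one_le_pow₀ hB1)
      (fun k => ?_)
      (fun k j hj hjh => ih k j hj (Nat.lt_succ_iff.1 hjh)) k
    convert add_one_pow_growth hB1 hμ k.cast_nonneg h k using 3
    push_cast
    ring

theorem exists_sum_pow_row_le (hA : ∀ i j, 0 ≤ A i j)
    (hdesc : ∀ i j, A i j ≠ 0 → ht j ≤ ht i) (hS : ∀ i j, i ∈ S → A i j ≠ 0 → j ∈ S)
    (hw : ∀ i, 0 < w i)
    (hdiag : ∀ i ∈ S, ∑ j with ht j = ht i, A i j * w j ≤ μ * w i) (hμ : 1 ≤ μ)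
    {r : ι} (hr : r ∈ S) {h : ℕ} (hrh : ht r ≤ h) :
    ∃ C, 0 < C ∧ ∀ k : ℕ, 1 ≤ k → ∑ j, (A ^ k) r j ≤ C * (k : ℝ) ^ h * μ ^ k := by
  obtain ⟨B, hB1, hB⟩ := exists_mulVec_le_mul A hw
  have : Nonempty ι := ⟨r⟩
  obtain ⟨j₀, hj₀⟩ := Finite.exists_min w
  have hwr := hw r
  have hwj₀ := hw j₀
  refine ⟨(2 * B) ^ h * w r / w j₀, by positivity, fun k hk => ?_⟩
  have hk2 : (k : ℝ) + 1 ≤ 2 * k := by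
    have : (1 : ℝ) ≤ k := by exact_mod_cast hk
    linarith
  have hrow : w j₀ * ∑ j, (A ^ k) r j ≤ (A ^ k *ᵥ w) r :=
    mul_sum_row_le_mulVec (A ^ k) r (fun j => pow_apply_nonneg hA k r j) hj₀
  calc ∑ j, (A ^ k) r j
      ≤ (A ^ k *ᵥ w) r / w j₀ := by rw [le_div_iff₀ hwj₀, mul_comm]; exact hrow
    _ ≤ B ^ h * ((k : ℝ) + 1) ^ h * μ ^ k * w r / w j₀ := by
      gcongr
      exact pow_mulVec_le_of_height hA hdesc hS (fun i => (hw i).le) hdiag hB hμ hB1 h k r hr hrh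
    _ ≤ B ^ h * (2 * k) ^ h * μ ^ k * w r / w j₀ := by gcongr
    _ = (2 * B) ^ h * w r / w j₀ * (k : ℝ) ^ h * μ ^ k := by ring

end

section

variable {N m : ℕ} {G : Matrix (Fin N) (Fin N) ℕ} {blk : Fin N → Fin m}

theorem CommByIdx.self (i : Fin N) : CommByIdx G blk (blk i) i :=
  ⟨0, i, rfl, by simp⟩

theorem CommByIdx.of_adj {s : Fin m} {i j : Fin N} (hij : G i j ≠ 0)
    (h : CommByIdx G blk s j) : CommByIdx G blk s i := by
  obtain ⟨k, l, hl, hpos⟩ := h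
  refine ⟨k + 1, l, hl, lt_of_lt_of_le (Nat.mul_pos (Nat.pos_of_ne_zero hij) hpos) ?_⟩
  rw [pow_succ', mul_apply]
  exact single_le_sum (f := fun t => G i t * (G ^ k) t l) (fun _ _ => Nat.zero_le _)
    (mem_univ j)

end

theorem stmt_7_general
    -- Context: `G` is an `N × N` matrix with nonnegative integer entries, block upper
    -- triangular with respect to the partition of `Fin N` into `m` nonempty consecutive
    -- blocks given by the fibers of the monotone surjection `blk`; each diagonal block
    -- `G_s` has eigenvalue `λ_s ≥ 0` with strictly positive eigenvector `w|_{B_s}`.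
    (N m : ℕ)
    (G : Matrix (Fin N) (Fin N) ℕ)
    (blk : Fin N → Fin m)
    (hupper : ∀ i j : Fin N, blk j < blk i → G i j = 0)
    (lam : Fin m → ℝ)
    (w : Fin N → ℝ) (hw : ∀ i, 0 < w i)
    (heig : ∀ i : Fin N,
      ∑ j ∈ Finset.univ.filter (fun j => blk j = blk i), (G i j : ℝ) * w j
        = lam (blk i) * w i)
    :
    ∀ (r : Fin N) (μ : ℝ),
      IsGreatest {x : ℝ | ∃ s : Fin m, CommByIdx G blk s r ∧ lam s = x} μ →
      1 ≤ μ →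
      ∃ C : ℝ, 0 < C ∧
        ∀ k : ℕ, 1 ≤ k → ∑ j, ((G ^ k) r j : ℝ) ≤ C * (k : ℝ) ^ m * μ ^ k := by
  intro r μ hμmax hμ
  let A : Matrix (Fin N) (Fin N) ℝ := G.map (↑)
  let S : Set (Fin N) := {i | ∀ s, CommByIdx G blk s i → lam s ≤ μ}
  have hS (i j : Fin N) (hi : i ∈ S) (hij : A i j ≠ 0) : j ∈ S := fun s hs =>
    hi s (hs.of_adj (by simpa [A] using hij))
  -- heights `m - blk i` decrease along edges and are constant exactly on the blocks
  let ht (i : Fin N) : ℕ := m - blk i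
  have hdesc (i j : Fin N) (hij : A i j ≠ 0) : ht j ≤ ht i := by
    have : ¬ blk j < blk i := fun h => hij (by simp [A, hupper i j h])
    simp only [ht, not_lt, Fin.le_def] at this ⊢
    omega
  have hdiag (i : Fin N) (hi : i ∈ S) : ∑ j with ht j = ht i, A i j * w j ≤ μ * w i := by
    have hblk (j : Fin N) : ht j = ht i ↔ blk j = blk i := by
      simp only [ht, Fin.ext_iff]
      omega
    simp only [hblk, A, map_apply]
    rw [heig i]
    exact mul_le_mul_of_nonneg_right (hi _ (CommByIdx.self i)) (hw i).le
  obtain ⟨C, hC, hbound⟩ := exists_sum_pow_row_le (fun i j => by simp [A]) hdesc hS hw hdiag hμ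
    (r := r) (fun s hs => hμmax.2 ⟨s, hs, rfl⟩) (Nat.sub_le m (blk r))
  refine ⟨C, hC, fun k hk => ?_⟩
  have hA_pow : A ^ k = (G ^ k).map (↑) := (map_pow (Nat.castRingHom ℝ).mapMatrix G k).symm
  simpa [hA_pow] using hbound k hk

/-- if `μ` is the maximum of the eigenvalues `λ_s` over the blocks
communicated by the index `r`, and `μ ≥ 1`, then there is `C > 0` with
`∑_j (G^k)_{rj} ≤ C · k^m · μ^k` for all `k ≥ 1`. -/
theorem stmt_7
    -- Context: `G` is an `N × N` matrix with nonnegative integer entries, block upper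
    -- triangular with respect to the partition of `Fin N` into `m` nonempty consecutive
    -- blocks given by the fibers of the monotone surjection `blk`; each diagonal block
    -- `G_s` has eigenvalue `λ_s ≥ 0` with strictly positive eigenvector `w|_{B_s}`.
    (N m : ℕ) (hN : 1 ≤ N) (hm : 1 ≤ m)
    (G : Matrix (Fin N) (Fin N) ℕ)
    (blk : Fin N → Fin m) (hmono : Monotone blk) (hsurj : Function.Surjective blk)
    (hupper : ∀ i j : Fin N, blk j < blk i → G i j = 0)
    (lam : Fin m → ℝ) (hlam : ∀ s, 0 ≤ lam s)
    (w : Fin N → ℝ) (hw : ∀ i, 0 < w i)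
    (heig : ∀ i : Fin N,
      ∑ j ∈ Finset.univ.filter (fun j => blk j = blk i), (G i j : ℝ) * w j
        = lam (blk i) * w i)
    :
    ∀ (r : Fin N) (μ : ℝ),
      IsGreatest {x : ℝ | ∃ s : Fin m, CommByIdx G blk s r ∧ lam s = x} μ →
      1 ≤ μ →
      ∃ C : ℝ, 0 < C ∧
        ∀ k : ℕ, 1 ≤ k → ∑ j, ((G ^ k) r j : ℝ) ≤ C * (k : ℝ) ^ m * μ ^ k :=
  stmt_7_general N m G blk hupper lam w hw heig
end

section
/- If p is a probability vector and λ* := max{ λ_s : B_s is communicated by some index in the support of p } satisfies λ* ≥ 1, then there exist constants M₁, M₂ > 0 and an integer N₀ ≥ 1 such that M₁ · λ*^k ≤ s_k(p) ≤ M₂ · k^m · λ*^k for all k ≥ N₀. (This two-sided quantitative bound is established in the paper's proof of the convergence criterion for the series c_{τ,β}.) -/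
/-!
Write `v_k = G^k w`. Because `w` is a positive eigenvector of each diagonal block, induction
gives `v_k ≥ λ_s^k w` on `B_s`; a path of length `k₀` from the support of `p` into a block with
`λ_s = λ*` then yields the lower bound. On the indices reachable from the support all `λ_s ≤ λ*`,
and splitting `(G v_k)_j` into the diagonal block and the strictly later blocks gives by
induction `v_k(j) ≤ (C (k + 1))^(m - s) λ*^k w_j` for `j ∈ B_s`: each passage to a later block
costs one factor `C (k + 1)`, where `C` bounds `(G w)_j / w_j`. Since `w` is bounded above and below,
`s_k(p)` is comparable to `∑ p_i v_k(i)`.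
-/

open Matrix Finset

lemma sum_mul_le_mul_sum_of_pos {ι : Type*} {S : Finset ι} {a u v : ι → ℝ} {c : ℝ}
    (ha : ∀ l ∈ S, 0 ≤ a l) (h : ∀ l ∈ S, 0 < a l → u l ≤ c * v l) :
    ∑ l ∈ S, a l * u l ≤ c * ∑ l ∈ S, a l * v l := by
  rw [mul_sum]
  refine sum_le_sum fun l hl => ?_
  rcases (ha l hl).eq_or_lt with h0 | hpos
  · simp [← h0]
  · calc a l * u l ≤ a l * (c * v l) := mul_le_mul_of_nonneg_left (h l hl hpos) hpos.le
      _ = c * (a l * v l) := by ring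

lemma pow_succ_mul_add_pow_mul_le {C x μ : ℝ} (hC : 0 ≤ C) (hx : 0 ≤ x) (hμ : 1 ≤ μ) (e : ℕ) :
    (C * x) ^ (e + 1) * μ + (C * x) ^ e * C ≤ (C * (x + 1)) ^ (e + 1) * μ := by
  have hpow : (C * x) ^ e ≤ (C * (x + 1)) ^ e :=
    pow_le_pow_left₀ (by positivity) (by nlinarith) e
  calc (C * x) ^ (e + 1) * μ + (C * x) ^ e * C = (C * x) ^ e * C * (x * μ + 1) := by ring
    _ ≤ (C * (x + 1)) ^ e * C * ((x + 1) * μ) := by gcongr; linarith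
    _ = (C * (x + 1)) ^ (e + 1) * μ := by ring

lemma exists_one_le_forall_le {ι : Type*} [Finite ι] (f : ι → ℝ) : ∃ c, 1 ≤ c ∧ ∀ i, f i ≤ c := by
  obtain ⟨b, hb⟩ := (Set.finite_range f).bddAbove
  exact ⟨max b 1, le_max_right _ _, fun i => (hb ⟨i, rfl⟩).trans (le_max_left _ _)⟩

lemma exists_pos_forall_le_of_pos {ι : Type*} [Finite ι] {w : ι → ℝ} (hw : ∀ i, 0 < w i) :
    ∃ c, 0 < c ∧ ∀ i, c ≤ w i := by
  cases isEmpty_or_nonempty ι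
  · exact ⟨1, one_pos, isEmptyElim⟩
  · obtain ⟨i, hi⟩ := Finite.exists_min w
    exact ⟨w i, hw i, hi⟩

namespace Matrix

variable {ι : Type*} [Fintype ι] {w : ι → ℝ}

lemma mulVec_nonneg_of_nonneg {B : Matrix ι ι ℝ} (hB : ∀ i j, 0 ≤ B i j) (hw : 0 ≤ w) :
    0 ≤ B *ᵥ w :=
  fun i => dotProduct_nonneg_of_nonneg (fun j => hB i j) hw

lemma mulVec_apply_le_mulVec_apply {B : Matrix ι ι ℝ} (hB : ∀ i j, 0 ≤ B i j) {u v : ι → ℝ}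
    (huv : u ≤ v) (i : ι) : (B *ᵥ u) i ≤ (B *ᵥ v) i :=
  dotProduct_le_dotProduct_of_nonneg_left huv (fun j => hB i j)

lemma apply_mul_le_mulVec_apply {B : Matrix ι ι ℝ} (hB : ∀ i j, 0 ≤ B i j) (hw : 0 ≤ w)
    (i j : ι) : B i j * w j ≤ (B *ᵥ w) i :=
  single_le_sum (f := fun l => B i l * w l) (fun l _ => mul_nonneg (hB i l) (hw l)) (mem_univ j)

lemma mulVec_const_apply (B : Matrix ι ι ℝ) (c : ℝ) (i : ι) :
    (B *ᵥ fun _ => c) i = c * (B *ᵥ 1) i := by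
  simp [mulVec, dotProduct, mul_sum, mul_comm]

lemma mul_mulVec_one_apply_le {B : Matrix ι ι ℝ} (hB : ∀ i j, 0 ≤ B i j) {c : ℝ}
    (hc : ∀ i, c ≤ w i) (i : ι) : c * (B *ᵥ 1) i ≤ (B *ᵥ w) i :=
  mulVec_const_apply B c i ▸ mulVec_apply_le_mulVec_apply hB hc i

lemma mulVec_apply_le_mul_mulVec_one {B : Matrix ι ι ℝ} (hB : ∀ i j, 0 ≤ B i j) {d : ℝ}
    (hd : ∀ i, w i ≤ d) (i : ι) : (B *ᵥ w) i ≤ d * (B *ᵥ 1) i :=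
  mulVec_const_apply B d i ▸ mulVec_apply_le_mulVec_apply hB hd i

lemma pow_succ_apply_pos [DecidableEq ι] {G : Matrix ι ι ℕ} {k : ℕ} {i j l : ι}
    (hij : 0 < (G ^ k) i j) (hjl : 0 < G j l) : 0 < (G ^ (k + 1)) i l := by
  rw [pow_succ, mul_apply]
  exact sum_pos_iff.2 ⟨j, mem_univ _, Nat.mul_pos hij hjl⟩

variable [DecidableEq ι] {A : Matrix ι ι ℝ}

lemma pow_succ_mulVec_apply (k : ℕ) (i : ι) :
    (A ^ (k + 1) *ᵥ w) i = ∑ j, A i j * (A ^ k *ᵥ w) j := by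
  rw [pow_succ', ← mulVec_mulVec]
  rfl

lemma lam_pow_mul_le_pow_mulVec_apply {β : Type*} [DecidableEq β] {blk : ι → β} {lam : β → ℝ}
    (hA : ∀ i j, 0 ≤ A i j) (hw : 0 ≤ w)
    (heig : ∀ i, ∑ j ∈ univ.filter (fun j => blk j = blk i), A i j * w j = lam (blk i) * w i)
    (k : ℕ) (i : ι) : lam (blk i) ^ k * w i ≤ (A ^ k *ᵥ w) i := by
  induction k generalizing i with
  | zero => simp
  | succ k ih =>
    calc lam (blk i) ^ (k + 1) * w i
        = ∑ j ∈ univ.filter (fun j => blk j = blk i), A i j * (lam (blk j) ^ k * w j) := by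
          rw [pow_succ, mul_assoc, ← heig, mul_sum]
          refine sum_congr rfl fun j hj => ?_
          rw [(mem_filter.1 hj).2]
          ring
      _ ≤ ∑ j ∈ univ.filter (fun j => blk j = blk i), A i j * (A ^ k *ᵥ w) j :=
          sum_le_sum fun j _ => mul_le_mul_of_nonneg_left (ih j) (hA i j)
      _ ≤ (A ^ (k + 1) *ᵥ w) i := by
          rw [pow_succ_mulVec_apply]
          exact sum_le_sum_of_subset_of_nonneg (filter_subset _ _) fun j _ _ =>
            mul_nonneg (hA i j) (mulVec_nonneg_of_nonneg (pow_apply_nonneg hA k) hw j)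

lemma pow_mulVec_apply_le {m : ℕ} {blk : ι → Fin m} (hA : ∀ i j, 0 ≤ A i j) (hw : 0 ≤ w)
    (hupper : ∀ i j, blk j < blk i → A i j = 0) {R : Set ι}
    (hR : ∀ j l, j ∈ R → 0 < A j l → l ∈ R) {μ C : ℝ} (hμ : 1 ≤ μ) (hC : 1 ≤ C)
    (hdiag : ∀ j ∈ R, ∑ l ∈ univ.filter (fun l => blk l = blk j), A j l * w l ≤ μ * w j)
    (hoff : ∀ j ∈ R, ∑ l ∈ univ.filter (fun l => ¬ blk l = blk j), A j l * w l ≤ C * w j)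
    (k : ℕ) : ∀ j ∈ R, (A ^ k *ᵥ w) j ≤ (C * (k + 1)) ^ (m - blk j) * μ ^ k * w j := by
  induction k with
  | zero =>
    intro j _
    simpa using le_mul_of_one_le_left (hw j) (one_le_pow₀ hC)
  | succ k ih =>
    intro j hj
    obtain ⟨e, he⟩ : ∃ e, m - blk j = e + 1 := ⟨m - blk j - 1, by omega⟩
    have hbase : 1 ≤ C * (k + 1) := by nlinarith [(Nat.cast_nonneg k : (0 : ℝ) ≤ k)]
    have hsame : ∑ l ∈ univ.filter (fun l => blk l = blk j), A j l * (A ^ k *ᵥ w) l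
        ≤ (C * (k + 1)) ^ (e + 1) * μ ^ k * (μ * w j) := by
      refine (sum_mul_le_mul_sum_of_pos (fun l _ => hA j l) fun l hl hpos => ?_).trans
        (mul_le_mul_of_nonneg_left (hdiag j hj) (by positivity))
      rw [← he, ← (mem_filter.1 hl).2]
      exact ih l (hR j l hj hpos)
    have hlater : ∑ l ∈ univ.filter (fun l => ¬ blk l = blk j), A j l * (A ^ k *ᵥ w) l
        ≤ (C * (k + 1)) ^ e * μ ^ k * (C * w j) := by
      refine (sum_mul_le_mul_sum_of_pos (fun l _ => hA j l) fun l hl hpos => ?_).trans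
        (mul_le_mul_of_nonneg_left (hoff j hj) (by positivity))
      have hlt : blk j < blk l :=
        lt_of_le_of_ne (not_lt.1 fun h => hpos.ne' (hupper j l h)) (Ne.symm (mem_filter.1 hl).2)
      refine (ih l (hR j l hj hpos)).trans ?_
      gcongr
      · exact hw l
      · have := Fin.lt_def.1 hlt
        omega
    calc (A ^ (k + 1) *ᵥ w) j
        = ∑ l ∈ univ.filter (fun l => blk l = blk j), A j l * (A ^ k *ᵥ w) l
          + ∑ l ∈ univ.filter (fun l => ¬ blk l = blk j), A j l * (A ^ k *ᵥ w) l := by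
          rw [sum_filter_add_sum_filter_not, pow_succ_mulVec_apply]
      _ ≤ (C * (k + 1)) ^ (e + 1) * μ ^ k * (μ * w j) + (C * (k + 1)) ^ e * μ ^ k * (C * w j) :=
          add_le_add hsame hlater
      _ = ((C * (k + 1)) ^ (e + 1) * μ + (C * (k + 1)) ^ e * C) * μ ^ k * w j := by ring
      _ ≤ (C * ((k + 1) + 1)) ^ (e + 1) * μ * μ ^ k * w j := by
          gcongr
          · exact hw j
          · exact pow_succ_mul_add_pow_mul_le (by linarith) (by positivity) hμ e
      _ = (C * ((k + 1 : ℕ) + 1)) ^ (m - blk j) * μ ^ (k + 1) * w j := by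
          rw [he]
          push_cast
          ring

lemma exists_pos_mul_pow_le_pow_mulVec_one_apply {β : Type*} [DecidableEq β] {blk : ι → β}
    {lam : β → ℝ} (hA : ∀ i j, 0 ≤ A i j) (hw : ∀ i, 0 < w i)
    (heig : ∀ i, ∑ j ∈ univ.filter (fun j => blk j = blk i), A i j * w j = lam (blk i) * w i)
    {i j : ι} {k₀ : ℕ} (hij : 0 < (A ^ k₀) i j) {μ : ℝ} (hμ : 0 < μ) (hj : lam (blk j) = μ) :
    ∃ M, 0 < M ∧ ∀ k, k₀ ≤ k → M * μ ^ k ≤ (A ^ k *ᵥ 1) i := by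
  obtain ⟨d, hd, hwd⟩ := exists_one_le_forall_le w
  have hw₀ : 0 ≤ w := fun i => (hw i).le
  refine ⟨(A ^ k₀) i j * w j / (d * μ ^ k₀), by have := hw j; positivity, fun k hk => ?_⟩
  obtain ⟨n, rfl⟩ := Nat.exists_eq_add_of_le hk
  have hlow := lam_pow_mul_le_pow_mulVec_apply hA hw₀ heig n j
  rw [hj] at hlow
  have hpath := apply_mul_le_mulVec_apply (pow_apply_nonneg hA k₀)
    (mulVec_nonneg_of_nonneg (pow_apply_nonneg hA n) hw₀) i j
  rw [mulVec_mulVec, ← pow_add] at hpath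
  have hd₀ : 0 < d := by linarith
  calc (A ^ k₀) i j * w j / (d * μ ^ k₀) * μ ^ (k₀ + n) = (A ^ k₀) i j * (μ ^ n * w j) / d := by
        field_simp
        ring
    _ ≤ (A ^ k₀) i j * (A ^ n *ᵥ w) j / d := by gcongr
    _ ≤ (A ^ (k₀ + n) *ᵥ w) i / d := by gcongr
    _ ≤ (A ^ (k₀ + n) *ᵥ 1) i :=
        div_le_of_le_mul₀ hd₀.le (mulVec_nonneg_of_nonneg (pow_apply_nonneg hA _) zero_le_one i)
          ((mulVec_apply_le_mul_mulVec_one (pow_apply_nonneg hA _) hwd i).trans_eq (mul_comm _ _))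

lemma exists_pos_pow_mulVec_one_apply_le {m : ℕ} {blk : ι → Fin m} {lam : Fin m → ℝ}
    (hA : ∀ i j, 0 ≤ A i j) (hw : ∀ i, 0 < w i) (hupper : ∀ i j, blk j < blk i → A i j = 0)
    (heig : ∀ i, ∑ j ∈ univ.filter (fun j => blk j = blk i), A i j * w j = lam (blk i) * w i)
    {R : Set ι} (hR : ∀ j l, j ∈ R → 0 < A j l → l ∈ R) {μ : ℝ} (hμ : 1 ≤ μ)
    (hRlam : ∀ j ∈ R, lam (blk j) ≤ μ) :
    ∃ M, 0 < M ∧ ∀ k : ℕ, 1 ≤ k → ∀ j ∈ R, (A ^ k *ᵥ 1) j ≤ M * (k : ℝ) ^ m * μ ^ k := by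
  obtain ⟨c, hc, hcw⟩ := exists_pos_forall_le_of_pos hw
  obtain ⟨d, hd, hwd⟩ := exists_one_le_forall_le w
  obtain ⟨C, hC, hCw⟩ := exists_one_le_forall_le fun j => (A *ᵥ w) j / w j
  have hw₀ : 0 ≤ w := fun i => (hw i).le
  have hdiag : ∀ j ∈ R, ∑ l ∈ univ.filter (fun l => blk l = blk j), A j l * w l ≤ μ * w j :=
    fun j hj => (heig j).trans_le (mul_le_mul_of_nonneg_right (hRlam j hj) (hw₀ j))
  have hoff : ∀ j ∈ R, ∑ l ∈ univ.filter (fun l => ¬ blk l = blk j), A j l * w l ≤ C * w j := by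
    intro j _
    calc ∑ l ∈ univ.filter (fun l => ¬ blk l = blk j), A j l * w l ≤ (A *ᵥ w) j :=
          sum_le_sum_of_subset_of_nonneg (filter_subset _ _) fun l _ _ =>
            mul_nonneg (hA j l) (hw₀ l)
      _ ≤ C * w j := (div_le_iff₀ (hw j)).1 (hCw j)
  refine ⟨(2 * C) ^ m * d / c, by positivity, fun k hk j hj => ?_⟩
  have hk' : (1 : ℝ) ≤ k := by exact_mod_cast hk
  have hbase : 1 ≤ C * (k + 1) := by nlinarith
  calc (A ^ k *ᵥ 1) j ≤ (A ^ k *ᵥ w) j / c :=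
        (le_div_iff₀ hc).2 <| (mul_comm _ _).trans_le <|
          mul_mulVec_one_apply_le (pow_apply_nonneg hA k) hcw j
    _ ≤ (C * (k + 1)) ^ (m - blk j) * μ ^ k * w j / c := by
        gcongr
        exact pow_mulVec_apply_le hA hw₀ hupper hR hμ hC hdiag hoff k j hj
    _ ≤ (2 * C * k) ^ m * μ ^ k * d / c := by
        have hpow : (C * (k + 1)) ^ (m - blk j) ≤ (2 * C * k) ^ m :=
          calc (C * (k + 1)) ^ (m - blk j) ≤ (C * (k + 1)) ^ m :=
                pow_le_pow_right₀ hbase (Nat.sub_le _ _)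
            _ ≤ (2 * C * k) ^ m := pow_le_pow_left₀ (by positivity) (by nlinarith) m
        have := hwd j
        have := hw j
        gcongr
    _ = (2 * C) ^ m * d / c * (k : ℝ) ^ m * μ ^ k := by ring

end Matrix

theorem stmt_8_general
    -- Context: `G` is an `N × N` matrix with nonnegative integer entries, block upper
    -- triangular with respect to the partition of `Fin N` into `m` nonempty consecutive
    -- blocks given by the fibers of the monotone surjection `blk`; each diagonal block
    -- `G_s` has eigenvalue `λ_s ≥ 0` with strictly positive eigenvector `w|_{B_s}`.
    (N m : ℕ)
    (G : Matrix (Fin N) (Fin N) ℕ)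
    (blk : Fin N → Fin m)
    (hupper : ∀ i j : Fin N, blk j < blk i → G i j = 0)
    (lam : Fin m → ℝ)
    (w : Fin N → ℝ) (hw : ∀ i, 0 < w i)
    (heig : ∀ i : Fin N,
      ∑ j ∈ Finset.univ.filter (fun j => blk j = blk i), (G i j : ℝ) * w j
        = lam (blk i) * w i)
    :
    ∀ p : Fin N → ℝ, (∀ i, 0 ≤ p i) → (∑ i, p i = 1) →
      ∀ μ : ℝ,
        IsGreatest
          {x : ℝ | ∃ s : Fin m, (∃ i : Fin N, 0 < p i ∧ CommByIdx G blk s i) ∧ lam s = x}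
          μ →
        1 ≤ μ →
        ∃ M₁ M₂ : ℝ, 0 < M₁ ∧ 0 < M₂ ∧ ∃ N₀ : ℕ, 1 ≤ N₀ ∧
          ∀ k : ℕ, N₀ ≤ k →
            M₁ * μ ^ k ≤ sk G p k ∧ sk G p k ≤ M₂ * (k : ℝ) ^ m * μ ^ k := by
  intro p hp hps μ ⟨⟨s₀, ⟨i₀, hpi₀, k₀, j₀, hj₀, hGk₀⟩, hs₀⟩, hμmax⟩ hμ
  set A : Matrix (Fin N) (Fin N) ℝ := G.map (Nat.castRingHom ℝ)
  have hA : ∀ i j, 0 ≤ A i j := fun i j => Nat.cast_nonneg _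
  have hApow : ∀ k i j, (A ^ k) i j = (G ^ k) i j := fun k i j => by rw [← Matrix.map_pow]; rfl
  have hsk : ∀ k, sk G p k = ∑ i, p i * (A ^ k *ᵥ 1) i := fun k => by
    simp [sk, mulVec, dotProduct, hApow, mul_sum]
  have hupperA : ∀ i j, blk j < blk i → A i j = 0 := fun i j h => by simp [A, hupper i j h]
  let R : Set (Fin N) := {j | ∃ i, 0 < p i ∧ ∃ k, 0 < (G ^ k) i j}
  have hR : ∀ j l, j ∈ R → 0 < A j l → l ∈ R := fun j l ⟨i, hi, k, hk⟩ hjl =>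
    ⟨i, hi, k + 1, pow_succ_apply_pos hk (Nat.cast_pos.1 hjl)⟩
  have hRlam : ∀ j ∈ R, lam (blk j) ≤ μ := fun j ⟨i, hi, k, hk⟩ =>
    hμmax ⟨blk j, ⟨i, hi, k, j, rfl, hk⟩, rfl⟩
  obtain ⟨M₁, hM₁, hlow⟩ := exists_pos_mul_pow_le_pow_mulVec_one_apply hA hw heig
    (i := i₀) (j := j₀) (k₀ := k₀) (by rw [hApow]; exact_mod_cast hGk₀) (by linarith)
    (by rw [hj₀, hs₀])
  obtain ⟨M₂, hM₂, hup⟩ := exists_pos_pow_mulVec_one_apply_le hA hw hupperA heig hR hμ hRlam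
  refine ⟨p i₀ * M₁, M₂, by positivity, hM₂, k₀ + 1, by omega, fun k hk => ⟨?_, ?_⟩⟩
  · rw [hsk, mul_assoc]
    calc p i₀ * (M₁ * μ ^ k) ≤ p i₀ * (A ^ k *ᵥ 1) i₀ := by gcongr; exact hlow k (by omega)
      _ ≤ ∑ i, p i * (A ^ k *ᵥ 1) i :=
        single_le_sum (f := fun i => p i * (A ^ k *ᵥ 1) i) (fun i _ => mul_nonneg (hp i)
          (mulVec_nonneg_of_nonneg (pow_apply_nonneg hA k) zero_le_one i)) (mem_univ i₀)
  · rw [hsk]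
    calc ∑ i, p i * (A ^ k *ᵥ 1) i ≤ M₂ * k ^ m * μ ^ k * ∑ i, p i * 1 :=
          sum_mul_le_mul_sum_of_pos (fun i _ => hp i) fun i _ hi =>
            (hup k (by omega) i ⟨i, hi, 0, by simp⟩).trans_eq (mul_one _).symm
      _ = M₂ * k ^ m * μ ^ k := by simp [hps]

/-- if `p` is a probability vector and `μ = λ*` is the maximum of the
eigenvalues `λ_s` over the blocks communicated by the support of `p`, with `μ ≥ 1`,
then there are `M₁, M₂ > 0` and `N₀ ≥ 1` such that
`M₁ · μ^k ≤ s_k(p) ≤ M₂ · k^m · μ^k` for all `k ≥ N₀`. -/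
theorem stmt_8
    -- Context: `G` is an `N × N` matrix with nonnegative integer entries, block upper
    -- triangular with respect to the partition of `Fin N` into `m` nonempty consecutive
    -- blocks given by the fibers of the monotone surjection `blk`; each diagonal block
    -- `G_s` has eigenvalue `λ_s ≥ 0` with strictly positive eigenvector `w|_{B_s}`.
    (N m : ℕ) (hN : 1 ≤ N) (hm : 1 ≤ m)
    (G : Matrix (Fin N) (Fin N) ℕ)
    (blk : Fin N → Fin m) (hmono : Monotone blk) (hsurj : Function.Surjective blk)
    (hupper : ∀ i j : Fin N, blk j < blk i → G i j = 0)
    (lam : Fin m → ℝ) (hlam : ∀ s, 0 ≤ lam s)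
    (w : Fin N → ℝ) (hw : ∀ i, 0 < w i)
    (heig : ∀ i : Fin N,
      ∑ j ∈ Finset.univ.filter (fun j => blk j = blk i), (G i j : ℝ) * w j
        = lam (blk i) * w i)
    :
    ∀ p : Fin N → ℝ, (∀ i, 0 ≤ p i) → (∑ i, p i = 1) →
      ∀ μ : ℝ,
        IsGreatest
          {x : ℝ | ∃ s : Fin m, (∃ i : Fin N, 0 < p i ∧ CommByIdx G blk s i) ∧ lam s = x}
          μ →
        1 ≤ μ →
        ∃ M₁ M₂ : ℝ, 0 < M₁ ∧ 0 < M₂ ∧ ∃ N₀ : ℕ, 1 ≤ N₀ ∧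
          ∀ k : ℕ, N₀ ≤ k →
            M₁ * μ ^ k ≤ sk G p k ∧ sk G p k ≤ M₂ * (k : ℝ) ^ m * μ ^ k :=
  stmt_8_general N m G blk hupper lam w hw heig
end
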